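/- Let Q be the cyclic 4-node quiver with arrows α₀,α₁: 1→2, β₀,β₁: 2→3, γ₀,γ₁: 3→4, δ₀,δ₁: 4→1 and relations (for all cyclic rotations) β₀γ₁δ₁ = β₁γ₁δ₀, β₁γ₀δ₀ = β₀γ₀δ₁, etc., derived from the superpotential W = tr(α₀(β₀γ₁δ₁ − β₁γ₁δ₀) + α₁(β₁γ₀δ₀ − β₀γ₀δ₁)). Then every path p = p₁p₂⋯p_k in ℂQ has a unique normal-form representative p̃₁p̃₂⋯p̃_k such that the subsequences of arrows in even positions and in odd positions each have weakly increasing indices. -/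

import Mathlib

/-!
The F-term relations say that
`arr v a * arr (v+1) b * arr (v+2) c = arr v c * arr (v+1) b * arr (v+2) a`:
indices two positions apart may be exchanged. Replacing a pattern `1 b 0` by `0 b 1` strictly
decreases `moment` (the sum of the indices weighted by their distance to the end), so repeating
it reaches a normal form.

For uniqueness, send the arrow `v → v + 1` with index `i` to the elementary matrix `E_{v,v+1}`
times the commuting variable `X (parity v, i)`. Since the F-term relations only exchange arrows
starting at vertices of the same parity, this respects them, and a path is sent to `E_{v,v+k}`
times a monomial recording the multisets of indices at even and at odd positions. These two
multisets determine a normal form.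
-/

open FreeAlgebra

/-- Generators of the path algebra of the cyclic quiver with vertices `0,1,2,3` and two
arrows `ar v 0, ar v 1 : v → v+1` for each vertex `v` (so `α_i = ar 0 i`, `β_i = ar 1 i`,
`γ_i = ar 2 i`, `δ_i = ar 3 i`). -/
inductive GC where
  | e : Fin 4 → GC             -- trivial paths
  | ar : Fin 4 → Fin 2 → GC    -- the two arrows `v → v+1`

namespace GC

/-- Relations presenting the path algebra of the cyclic quiver modulo the F-term
relations of the superpotential
`W = tr(α₀(β₀γ₁δ₁ − β₁γ₁δ₀) + α₁(β₁γ₀δ₀ − β₀γ₀δ₁))`: for every vertex `v`, the paths of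
length three starting at `v` satisfy `(0,1,1) = (1,1,0)` and `(1,0,0) = (0,0,1)`. -/
inductive rel : FreeAlgebra ℂ GC → FreeAlgebra ℂ GC → Prop
  | unit : rel (∑ i : Fin 4, ι ℂ (e i)) 1
  | orth (i j : Fin 4) : rel (ι ℂ (e i) * ι ℂ (e j)) (if i = j then ι ℂ (e i) else 0)
  | src (v : Fin 4) (i : Fin 2) : rel (ι ℂ (e v) * ι ℂ (ar v i)) (ι ℂ (ar v i))
  | tgt (v : Fin 4) (i : Fin 2) : rel (ι ℂ (ar v i) * ι ℂ (e (v + 1))) (ι ℂ (ar v i))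
  | fterm₁ (v : Fin 4) :
      rel (ι ℂ (ar v 0) * ι ℂ (ar (v + 1) 1) * ι ℂ (ar (v + 2) 1))
          (ι ℂ (ar v 1) * ι ℂ (ar (v + 1) 1) * ι ℂ (ar (v + 2) 0))
  | fterm₂ (v : Fin 4) :
      rel (ι ℂ (ar v 1) * ι ℂ (ar (v + 1) 0) * ι ℂ (ar (v + 2) 0))
          (ι ℂ (ar v 0) * ι ℂ (ar (v + 1) 0) * ι ℂ (ar (v + 2) 1))

end GC

/-- The path algebra `ℂQ` of the cyclic quiver modulo the F-term relations of `W`. -/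
abbrev AC : Type := RingQuot GC.rel

namespace AC

noncomputable def ε (v : Fin 4) : AC := RingQuot.mkAlgHom ℂ GC.rel (ι ℂ (GC.e v))

noncomputable def arr (v : Fin 4) (i : Fin 2) : AC := RingQuot.mkAlgHom ℂ GC.rel (ι ℂ (GC.ar v i))

/-- The element of `ℂQ` determined by a path: since each vertex `v` has exactly the two
outgoing arrows `ar v 0, ar v 1 : v → v + 1`, a path is recorded by its starting vertex
together with the list of the indices of its consecutive arrows. -/
noncomputable def pathEl : Fin 4 → List (Fin 2) → AC
  | v, [] => ε v
  | v, i :: l => arr v i * pathEl (v + 1) l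

/-- A word of arrow indices is in normal form when the subsequences of indices in the even
positions and in the odd positions are each weakly increasing. -/
def NormalForm (l : List (Fin 2)) : Prop :=
  ∀ (i : ℕ) (h : i + 2 < l.length), l.get ⟨i, by omega⟩ ≤ l.get ⟨i + 2, h⟩

end AC

open Fin.NatCast Fin.CommRing

namespace List

variable {α : Type*}

def evens : List α → List α
  | [] => []
  | [a] => [a]
  | a :: _ :: l => a :: evens l

def odds (l : List α) : List α := evens l.tail

@[simp] lemma evens_nil : evens ([] : List α) = [] := rfl

@[simp] lemma odds_nil : odds ([] : List α) = [] := rfl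

@[simp] lemma evens_cons (a : α) (l : List α) : evens (a :: l) = a :: odds l := by
  cases l <;> rfl

@[simp] lemma odds_cons (a : α) (l : List α) : odds (a :: l) = evens l := rfl

@[simp] lemma interleave_evens_odds : ∀ l : List α, (evens l).interleave (odds l) = l
  | [] => by simp
  | a :: l => by simp [interleave_evens_odds l]

end List

namespace AC

open List Matrix MvPolynomial

lemma NormalForm.of_cons {a : Fin 2} {l : List (Fin 2)} (h : NormalForm (a :: l)) :
    NormalForm l := fun i hi => by
  simpa using h (i + 1) (by simp; omega)

lemma NormalForm.isChain_evens_and_odds :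
    ∀ {l : List (Fin 2)}, NormalForm l → (evens l).IsChain (· ≤ ·) ∧ (odds l).IsChain (· ≤ ·)
  | [], _ => by simp
  | a :: l, h => by
    obtain ⟨hev, hodd⟩ := isChain_evens_and_odds h.of_cons
    refine ⟨?_, hev⟩
    rw [evens_cons, isChain_cons]
    refine ⟨?_, hodd⟩
    match l with
    | [] | [_] => simp
    | _ :: c :: _ => simpa using h 0 (by simp)

lemma NormalForm.eq_of_perm {l₁ l₂ : List (Fin 2)} (h₁ : NormalForm l₁) (h₂ : NormalForm l₂)
    (hev : evens l₁ ~ evens l₂) (hodd : odds l₁ ~ odds l₂) : l₁ = l₂ := by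
  obtain ⟨hev₁, hodd₁⟩ := h₁.isChain_evens_and_odds
  obtain ⟨hev₂, hodd₂⟩ := h₂.isChain_evens_and_odds
  rw [← interleave_evens_odds l₁, ← interleave_evens_odds l₂,
    hev.eq_of_sortedLE hev₁.sortedLE hev₂.sortedLE, hodd.eq_of_sortedLE hodd₁.sortedLE hodd₂.sortedLE]

def parity (v : Fin 4) : Fin 2 := (v.val : Fin 2)

lemma parity_add_one : ∀ v : Fin 4, parity (v + 1) = parity v + 1 := by decide

lemma parity_add_two : ∀ v : Fin 4, parity (v + 2) = parity v := by decide

def weight (v : Fin 4) (l : List (Fin 2)) : Multiset (Fin 2 × Fin 2) :=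
  (evens l : Multiset (Fin 2)).map (parity v, ·) +
    (odds l : Multiset (Fin 2)).map (parity v + 1, ·)

lemma weight_cons (v : Fin 4) (i : Fin 2) (l : List (Fin 2)) :
    weight v (i :: l) = (parity v, i) ::ₘ weight (v + 1) l := by
  have h : parity v + 1 + 1 = parity v := by grind
  simp only [weight, evens_cons, odds_cons, parity_add_one, h, ← Multiset.cons_coe,
    Multiset.map_cons]
  rw [Multiset.cons_add, add_comm]

lemma count_weight (v : Fin 4) (l : List (Fin 2)) (p b : Fin 2) :
    (weight v l).count (p, b) =
      if p = parity v then (evens l).count b else (odds l).count b := by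
  have hp : ∀ x : Fin 2, p = x ∨ p = x + 1 := by revert p; decide
  have hne : ∀ x : Fin 2, x ≠ x + 1 ∧ x + 1 ≠ x := by decide
  rcases hp (parity v) with rfl | rfl <;>
    simp [weight, count_map_of_injective _ _ (Prod.mk_right_injective _), count_eq_zero, hne]

lemma perm_of_weight_eq {v : Fin 4} {l₁ l₂ : List (Fin 2)} (h : weight v l₁ = weight v l₂) :
    evens l₁ ~ evens l₂ ∧ odds l₁ ~ odds l₂ := by
  constructor <;> refine perm_iff_count.2 fun b => ?_
  · simpa [count_weight] using congr_arg (Multiset.count (parity v, b)) h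
  · simpa [count_weight] using congr_arg (Multiset.count (parity v + 1, b)) h

local notation "Mat" => Matrix (Fin 4) (Fin 4) (MvPolynomial (Fin 2 × Fin 2) ℂ)

noncomputable def genMatrix : GC → Mat
  | .e v => single v v 1
  | .ar v i => single v (v + 1) (X (parity v, i))

lemma lift_genMatrix_rel ⦃x y : FreeAlgebra ℂ GC⦄ (h : GC.rel x y) :
    lift ℂ genMatrix x = lift ℂ genMatrix y := by
  have add_one_add_one (v : Fin 4) : v + 1 + 1 = v + 2 := by ring
  induction h with
  | unit => simp [genMatrix, sum_single_one]
  | orth i j =>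
    by_cases hij : i = j
    · subst hij; simp [genMatrix]
    · simp [genMatrix, hij, single_mul_single_of_ne]
  | src | tgt => simp [genMatrix]
  | fterm₁ v | fterm₂ v =>
    simp only [_root_.map_mul, lift_ι_apply, genMatrix, add_one_add_one, single_mul_single_same,
      parity_add_two]
    ring_nf

noncomputable def toMatrix : AC →ₐ[ℂ] Mat :=
  RingQuot.liftAlgHom ℂ ⟨lift ℂ genMatrix, lift_genMatrix_rel⟩

lemma toMatrix_pathEl : ∀ (l : List (Fin 2)) (v : Fin 4),
    toMatrix (pathEl v l) = single v (v + l.length) (monomial (Multiset.toFinsupp (weight v l)) 1)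
  | [], v => by simp [pathEl, toMatrix, ε, genMatrix, weight]
  | i :: l, v => by
    have hv : v + ((i :: l).length : ℕ) = v + 1 + l.length := by
      rw [length_cons, Nat.cast_succ]; ring
    rw [pathEl, _root_.map_mul, toMatrix_pathEl l (v + 1), hv, weight_cons,
      ← Multiset.singleton_add, Multiset.toFinsupp_add, Multiset.toFinsupp_singleton]
    simp [toMatrix, arr, genMatrix, X, monomial_mul]

lemma weight_eq_of_pathEl_eq {v : Fin 4} {l₁ l₂ : List (Fin 2)} (hlen : l₁.length = l₂.length)
    (h : pathEl v l₁ = pathEl v l₂) : weight v l₁ = weight v l₂ := by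
  have hmat := congr_arg (fun M : Mat => M v (v + l₂.length)) (congr_arg toMatrix h)
  simp only [toMatrix_pathEl, hlen, single_apply_same] at hmat
  exact Multiset.toFinsupp.injective (monomial_left_injective one_ne_zero hmat)

lemma NormalForm.eq_of_pathEl_eq {v : Fin 4} {l₁ l₂ : List (Fin 2)} (h₁ : NormalForm l₁)
    (h₂ : NormalForm l₂) (hlen : l₁.length = l₂.length) (h : pathEl v l₁ = pathEl v l₂) :
    l₁ = l₂ :=
  have ⟨hev, hodd⟩ := perm_of_weight_eq (weight_eq_of_pathEl_eq hlen h)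
  h₁.eq_of_perm h₂ hev hodd

lemma arr_mul_arr_mul_arr_swap (v : Fin 4) (a b c : Fin 2) :
    arr v a * arr (v + 1) b * arr (v + 2) c = arr v c * arr (v + 1) b * arr (v + 2) a := by
  have h₁ := RingQuot.mkAlgHom_rel ℂ (GC.rel.fterm₁ v)
  have h₂ := RingQuot.mkAlgHom_rel ℂ (GC.rel.fterm₂ v)
  simp only [_root_.map_mul] at h₁ h₂
  fin_cases a <;> fin_cases b <;> fin_cases c <;>
    first | rfl | exact h₁ | exact h₁.symm | exact h₂ | exact h₂.symm

lemma pathEl_append_congr {s t : List (Fin 2)} (h : ∀ w, pathEl w s = pathEl w t) :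
    ∀ (A : List (Fin 2)) (v : Fin 4), pathEl v (A ++ s) = pathEl v (A ++ t)
  | [], v => h v
  | i :: A, v => congr_arg (arr v i * ·) (pathEl_append_congr h A (v + 1))

lemma pathEl_append_swap (v : Fin 4) (A : List (Fin 2)) (a b c : Fin 2) (D : List (Fin 2)) :
    pathEl v (A ++ a :: b :: c :: D) = pathEl v (A ++ c :: b :: a :: D) := by
  refine pathEl_append_congr (fun w => ?_) A v
  have hw : w + 1 + 1 = w + 2 := by ring
  simp only [pathEl, hw, ← mul_assoc, arr_mul_arr_mul_arr_swap]

def moment : List (Fin 2) → ℕ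
  | [] => 0
  | i :: l => i.val * (l.length + 1) + moment l

lemma moment_append_swap_lt (A : List (Fin 2)) (b : Fin 2) (D : List (Fin 2)) :
    moment (A ++ 0 :: b :: 1 :: D) < moment (A ++ 1 :: b :: 0 :: D) := by
  induction A with
  | nil => simp only [nil_append, moment, length_cons, Fin.val_zero, Fin.val_one]; omega
  | cons i A ih => simp only [cons_append, moment, length_append, length_cons]; omega

lemma exists_eq_append_of_not_normalForm {l : List (Fin 2)} (h : ¬ NormalForm l) :
    ∃ A b D, l = A ++ 1 :: b :: 0 :: D := by
  simp only [NormalForm, not_forall, not_le, get_eq_getElem] at h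
  obtain ⟨k, hk, hlt⟩ := h
  have hk₀ : l[k] = 1 ∧ l[k + 2] = 0 := (by decide : ∀ x y : Fin 2, y < x → x = 1 ∧ y = 0) _ _ hlt
  refine ⟨l.take k, l[k + 1], l.drop (k + 3), ?_⟩
  rw [← hk₀.1, ← hk₀.2, ← drop_eq_getElem_cons, ← drop_eq_getElem_cons, ← drop_eq_getElem_cons,
    take_append_drop]

theorem exists_normalForm_pathEl_eq (v : Fin 4) (l : List (Fin 2)) :
    ∃ l', l'.length = l.length ∧ NormalForm l' ∧ pathEl v l' = pathEl v l := by
  by_cases h : NormalForm l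
  · exact ⟨l, rfl, h, rfl⟩
  obtain ⟨A, b, D, rfl⟩ := exists_eq_append_of_not_normalForm h
  have := moment_append_swap_lt A b D
  obtain ⟨l', hlen, hl', hpath⟩ := exists_normalForm_pathEl_eq v (A ++ 0 :: b :: 1 :: D)
  exact ⟨l', by simpa using hlen, hl', hpath.trans (pathEl_append_swap v A 0 b 1 D)⟩
termination_by moment l

end AC

open AC in
/-- Every path `p = p₁⋯p_k` in the path algebra of the cyclic quiver modulo the F-term
relations of `W` has a unique representative `p̃ = p̃₁⋯p̃_k` of the same length whose
indices at even positions and at odd positions are each weakly increasing. -/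
theorem stmt14 (v : Fin 4) (l : List (Fin 2)) :
    ∃! l' : List (Fin 2),
      l'.length = l.length ∧ NormalForm l' ∧ pathEl v l' = pathEl v l := by
  obtain ⟨l', hlen, hl', hpath⟩ := exists_normalForm_pathEl_eq v l
  refine ⟨l', ⟨hlen, hl', hpath⟩, fun m ⟨hmlen, hm, hmpath⟩ => ?_⟩
  exact hm.eq_of_pathEl_eq hl' (hmlen.trans hlen.symm) (hmpath.trans hpath.symm)
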